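/- arXiv:1509.02300 — 2 statements merged into one kernel-verified Lean document; each statement's English description precedes it below -/
import Mathlib

section
/- For each x ∈ S^6, let f(x) : ℝ^7 → ℝ^7 be the linear map induced on imaginary octonions by conjugation u ↦ (1/4)(e0+√3 x)u(e0−√3 x). Then f(x)^3 = id. -/
/-!
Write `a = e0 + √3 x`, so `conjMap x u = (a u) ā / 4`. For a unit imaginary `x` we have `x² = -1`,
hence `a` commutes with `x` and `a ā = 4`, so `x` is fixed. If `w` is imaginary and orthogonal to
`x`, then `x` anticommutes with `w`, so `a w = w ā` and, by right alternativity,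
`(a w) ā / 4 = w (ā² / 4) = -w/2 - (√3/2) w x`. Right multiplication `J w = w x` preserves the
orthogonal complement `W` of `x` in `Im 𝕆` and satisfies `J² = -1`, so on `W` the map acts as the
primitive cube root of unity `-1/2 - (√3/2) J`, and its cube is the identity.
-/

noncomputable section

/-- The octonions, realized by Cayley–Dickson doubling of the quaternions. -/
abbrev Octo := Quaternion ℝ × Quaternion ℝ

namespace Octo

/-- Octonion multiplication (Cayley–Dickson formula). -/
def mul' (x y : Octo) : Octo :=
  (x.1 * y.1 - star y.2 * x.2, y.2 * x.1 + x.2 * star y.1)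

/-- The unit octonion `e0`. -/
def one' : Octo := (1, 0)

/-- Octonionic conjugation. -/
def conj' (x : Octo) : Octo := (star x.1, -x.2)

/-- The real part of an octonion. -/
def re' (x : Octo) : ℝ := x.1.re

/-- The Euclidean inner product on the octonions `≅ ℝ^8`. -/
def dot (x y : Octo) : ℝ :=
  x.1.re * y.1.re + x.1.imI * y.1.imI + x.1.imJ * y.1.imJ + x.1.imK * y.1.imK +
  x.2.re * y.2.re + x.2.imI * y.2.imI + x.2.imJ * y.2.imJ + x.2.imK * y.2.imK

/-- The squared Euclidean norm of an octonion. -/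
def norm2 (x : Octo) : ℝ := dot x x

/-- The imaginary part of an octonion. -/
def im' (x : Octo) : Octo := x - (re' x) • one'

end Octo

/-- Conjugation by `e0 + √3·x` : `u ↦ (1/4)·((e0+√3x)·u)·(e0−√3x)`. -/
def conjMap (x : Octo) (u : Octo) : Octo :=
  (4 : ℝ)⁻¹ • Octo.mul' (Octo.mul' (Octo.one' + Real.sqrt 3 • x) u)
    (Octo.one' - Real.sqrt 3 • x)

namespace Octo

open Quaternion

theorem mul'_add (x y z : Octo) : mul' x (y + z) = mul' x y + mul' x z := by
  ext : 1 <;> simp only [mul', Prod.fst_add, Prod.snd_add, star_add, mul_add, add_mul] <;> abel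

theorem add_mul' (x y z : Octo) : mul' (x + y) z = mul' x z + mul' y z := by
  ext : 1 <;> simp only [mul', Prod.fst_add, Prod.snd_add, mul_add, add_mul] <;> abel

theorem mul'_sub (x y z : Octo) : mul' x (y - z) = mul' x y - mul' x z := by
  ext : 1 <;> simp only [mul', Prod.fst_sub, Prod.snd_sub, star_sub, mul_sub, sub_mul] <;> abel

theorem mul'_neg (x y : Octo) : mul' x (-y) = -mul' x y := by
  ext : 1 <;> simp only [mul', Prod.fst_neg, Prod.snd_neg, star_neg, mul_neg, neg_mul] <;> abel

theorem neg_mul' (x y : Octo) : mul' (-x) y = -mul' x y := by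
  ext : 1 <;> simp only [mul', Prod.fst_neg, Prod.snd_neg, mul_neg, neg_mul] <;> abel

theorem mul'_smul (c : ℝ) (x y : Octo) : mul' x (c • y) = c • mul' x y := by
  ext : 1 <;> simp only [mul', Prod.smul_fst, Prod.smul_snd, Quaternion.star_smul, mul_smul_comm,
    smul_mul_assoc, smul_sub, smul_add]

theorem smul_mul' (c : ℝ) (x y : Octo) : mul' (c • x) y = c • mul' x y := by
  ext : 1 <;> simp only [mul', Prod.smul_fst, Prod.smul_snd, mul_smul_comm, smul_mul_assoc,
    smul_sub, smul_add]

theorem mul'_one' (x : Octo) : mul' x one' = x := by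
  simp [mul', one']

theorem one'_mul' (x : Octo) : mul' one' x = x := by
  simp [mul', one']

theorem re'_add (x y : Octo) : re' (x + y) = re' x + re' y := rfl

theorem re'_sub (x y : Octo) : re' (x - y) = re' x - re' y := rfl

theorem re'_smul (c : ℝ) (x : Octo) : re' (c • x) = c * re' x := rfl

theorem re'_one' : re' one' = 1 := rfl

theorem dot_comm (x y : Octo) : dot x y = dot y x := by
  simp only [dot]; ring

theorem dot_sub_left (x y z : Octo) : dot (x - y) z = dot x z - dot y z := by
  simp only [dot, Prod.fst_sub, Prod.snd_sub, re_sub, imI_sub, imJ_sub, imK_sub]; ring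

theorem dot_smul_left (c : ℝ) (x y : Octo) : dot (c • x) y = c * dot x y := by
  simp only [dot, Prod.smul_fst, Prod.smul_snd, re_smul, imI_smul, imJ_smul, imK_smul, smul_eq_mul]
  ring

theorem mul'_mul'_self (x y : Octo) : mul' (mul' y x) x = mul' y (mul' x x) := by
  ext <;> simp only [mul', re_mul, imI_mul, imJ_mul, imK_mul, re_star, imI_star, imJ_star,
    imK_star, re_add, imI_add, imJ_add, imK_add, re_sub, imI_sub, imJ_sub, imK_sub] <;> ring

theorem mul'_self_mul' (x y : Octo) : mul' x (mul' x y) = mul' (mul' x x) y := by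
  ext <;> simp only [mul', re_mul, imI_mul, imJ_mul, imK_mul, re_star, imI_star, imJ_star,
    imK_star, re_add, imI_add, imJ_add, imK_add, re_sub, imI_sub, imJ_sub, imK_sub] <;> ring

theorem mul'_add_mul'_swap_of_re'_eq_zero (x y : Octo) (hx : re' x = 0) (hy : re' y = 0) :
    mul' x y + mul' y x = (-2 * dot x y) • one' := by
  simp only [re'] at hx hy
  ext <;> simp only [mul', dot, one', Prod.fst_add, Prod.snd_add, Prod.smul_fst, Prod.smul_snd,
    re_add, imI_add, imJ_add, imK_add, re_sub, imI_sub, imJ_sub, imK_sub, re_mul, imI_mul, imJ_mul,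
    imK_mul, re_star, imI_star, imJ_star, imK_star, re_smul, imI_smul, imJ_smul, imK_smul, re_one,
    imI_one, imJ_one, imK_one, re_zero, imI_zero, imJ_zero, imK_zero, smul_eq_mul, hx, hy] <;> ring

theorem re'_mul'_of_re'_eq_zero (x y : Octo) (hx : re' x = 0) (hy : re' y = 0) :
    re' (mul' x y) = -dot x y := by
  simp only [re'] at hx hy
  simp only [mul', dot, re', re_sub, re_mul, re_star, imI_star, imJ_star, imK_star, hx, hy]
  ring

theorem mul'_self_of_re'_eq_zero (x : Octo) (hx : re' x = 0) : mul' x x = (-norm2 x) • one' := by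
  calc mul' x x = (2 : ℝ)⁻¹ • (mul' x x + mul' x x) := by module
    _ = (-norm2 x) • one' := by
      rw [mul'_add_mul'_swap_of_re'_eq_zero x x hx hx, smul_smul, norm2]
      congr 1
      ring

theorem mul'_comm_of_dot_eq_zero {x w : Octo} (hx : re' x = 0) (hw : re' w = 0)
    (hwx : dot w x = 0) : mul' x w = -mul' w x := by
  refine eq_neg_of_add_eq_zero_left ?_
  rw [mul'_add_mul'_swap_of_re'_eq_zero x w hx hw, dot_comm, hwx, mul_zero, zero_smul]

theorem re'_mul'_of_dot_eq_zero {x w : Octo} (hx : re' x = 0) (hw : re' w = 0)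
    (hwx : dot w x = 0) : re' (mul' w x) = 0 := by
  rw [re'_mul'_of_re'_eq_zero w x hw hx, hwx, neg_zero]

theorem dot_mul'_of_dot_eq_zero {x w : Octo} (hx : re' x = 0) (hsq : mul' x x = -one')
    (hw : re' w = 0) (hwx : dot w x = 0) : dot (mul' w x) x = 0 := by
  have hright : mul' (mul' w x) x = -w := by rw [mul'_mul'_self, hsq, mul'_neg, mul'_one']
  have hleft : mul' x (mul' w x) = w := by
    rw [← neg_neg (mul' w x), ← mul'_comm_of_dot_eq_zero hx hw hwx, mul'_neg, mul'_self_mul',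
      hsq, neg_mul', one'_mul', neg_neg]
  -- polarization for the pair `(w x, x)`, whose two products `-w` and `w` cancel
  have h := congrArg re'
    (mul'_add_mul'_swap_of_re'_eq_zero (mul' w x) x (re'_mul'_of_dot_eq_zero hx hw hwx) hx)
  rw [hright, hleft, neg_add_cancel, re'_smul, re'_one'] at h
  change (0 : ℝ) = _ at h
  linarith

theorem exists_eq_smul_add_of_re'_eq_zero {x u : Octo} (hx : re' x = 0) (hn : norm2 x = 1)
    (hu : re' u = 0) : ∃ (c : ℝ) (w : Octo), re' w = 0 ∧ dot w x = 0 ∧ u = c • x + w :=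
  ⟨dot u x, u - dot u x • x, by rw [re'_sub, re'_smul, hu, hx, mul_zero, sub_zero],
    by rw [dot_sub_left, dot_smul_left, ← norm2, hn, mul_one, sub_self], (add_sub_cancel _ _).symm⟩

end Octo

open Octo

theorem conjMap_add (x u v : Octo) : conjMap x (u + v) = conjMap x u + conjMap x v := by
  rw [conjMap, conjMap, conjMap, mul'_add, add_mul', smul_add]

theorem conjMap_smul (x : Octo) (c : ℝ) (u : Octo) : conjMap x (c • u) = c • conjMap x u := by
  rw [conjMap, conjMap, mul'_smul, smul_mul', smul_comm]

theorem conjMap_self {x : Octo} (hsq : mul' x x = -one') : conjMap x x = x := by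
  have hs : √3 ^ 2 = 3 := Real.sq_sqrt (by norm_num)
  simp only [conjMap, add_mul', mul'_sub, smul_mul', mul'_smul, one'_mul', mul'_one', neg_mul',
    hsq]
  match_scalars <;> linarith

theorem conjMap_of_dot_eq_zero {x w : Octo} (hx : re' x = 0) (hsq : mul' x x = -one')
    (hw : re' w = 0) (hwx : dot w x = 0) :
    conjMap x w = (-1 / 2 : ℝ) • w + (-(√3 / 2)) • mul' w x := by
  have hs : √3 ^ 2 = 3 := Real.sq_sqrt (by norm_num)
  simp only [conjMap, add_mul', mul'_sub, smul_mul', mul'_smul, one'_mul', mul'_one', neg_mul',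
    mul'_neg, mul'_comm_of_dot_eq_zero hx hw hwx, mul'_mul'_self, hsq]
  match_scalars <;> linarith

theorem conjMap_smul_add_smul_mul' {x w : Octo} (hx : re' x = 0) (hsq : mul' x x = -one')
    (hw : re' w = 0) (hwx : dot w x = 0) (a b : ℝ) :
    conjMap x (a • w + b • mul' w x) =
      (-a / 2 + √3 / 2 * b) • w + (-(√3 / 2 * a) - b / 2) • mul' w x := by
  rw [conjMap_add, conjMap_smul, conjMap_smul, conjMap_of_dot_eq_zero hx hsq hw hwx,
    conjMap_of_dot_eq_zero hx hsq (re'_mul'_of_dot_eq_zero hx hw hwx)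
      (dot_mul'_of_dot_eq_zero hx hsq hw hwx), mul'_mul'_self, hsq, mul'_neg, mul'_one']
  module

theorem conjMap_conjMap_conjMap_of_dot_eq_zero {x w : Octo} (hx : re' x = 0)
    (hsq : mul' x x = -one') (hw : re' w = 0) (hwx : dot w x = 0) :
    conjMap x (conjMap x (conjMap x w)) = w := by
  have hs : √3 ^ 2 = 3 := Real.sq_sqrt (by norm_num)
  have hs3 : √3 ^ 3 = 3 * √3 := by rw [pow_succ, hs]
  have hw' : w = (1 : ℝ) • w + (0 : ℝ) • mul' w x := by module
  rw [hw', conjMap_smul_add_smul_mul' hx hsq hw hwx, conjMap_smul_add_smul_mul' hx hsq hw hwx,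
    conjMap_smul_add_smul_mul' hx hsq hw hwx]
  match_scalars <;> ring_nf <;> linarith

/-- For `x ∈ S⁶`, the map induced by conjugation by `e0+√3x` preserves the
imaginary octonions `≅ ℝ⁷` and its cube is the identity: `f(x)³ = id`. -/
theorem stmt4 (x : Octo) (him : Octo.re' x = 0) (hx : Octo.norm2 x = 1) :
    (∀ u, Octo.re' u = 0 → Octo.re' (conjMap x u) = 0) ∧
    (∀ u, Octo.re' u = 0 → conjMap x (conjMap x (conjMap x u)) = u) := by
  have hsq : mul' x x = -one' := by rw [mul'_self_of_re'_eq_zero x him, hx, neg_one_smul]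
  constructor
  · intro u hu
    obtain ⟨c, w, hw, hwx, rfl⟩ := exists_eq_smul_add_of_re'_eq_zero him hx hu
    rw [conjMap_add, conjMap_smul, conjMap_self hsq, conjMap_of_dot_eq_zero him hsq hw hwx]
    simp only [re'_add, re'_smul, him, hw, re'_mul'_of_dot_eq_zero him hw hwx, mul_zero, add_zero]
  · intro u hu
    obtain ⟨c, w, hw, hwx, rfl⟩ := exists_eq_smul_add_of_re'_eq_zero him hx hu
    simp only [conjMap_add, conjMap_smul, conjMap_self hsq,
      conjMap_conjMap_conjMap_of_dot_eq_zero him hsq hw hwx]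
end
end

section
/- Let H be a finite-dimensional complex inner product space, and let A, B ⊆ H be subspaces with orthogonal projections P, Q. Then the sequence (PQ)^j converges in operator norm to an idempotent whose range is A ∩ B; in particular, lim_{j→∞} trace((PQ)^j) = dim_ℂ(A ∩ B). -/
/-!
Write `T = P_A P_B` and `E = P_{A ⊓ B}`. Then `TE = ET = E = E²`, so `T - E` and `E` annihilate
each other and `Tⁿ⁺¹ = (T - E)ⁿ⁺¹ + E`. Moreover `T - E = T P_{(A ⊓ B)ᗮ}`, and `‖P_A P_B x‖ = ‖x‖`
forces `x ∈ A ⊓ B`, so `T - E` strictly shrinks every nonzero vector; by compactness of the unit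
sphere `‖T - E‖ < 1`, hence `(T - E)ⁿ → 0` and `Tⁿ → E`. The trace is continuous and
`tr E = dim (A ⊓ B)`.
-/

open Filter Topology

theorem add_pow_succ_of_mul_eq_zero {R : Type*} [Ring R] {a b : R} (hab : a * b = 0)
    (hba : b * a = 0) (n : ℕ) : (a + b) ^ (n + 1) = a ^ (n + 1) + b ^ (n + 1) := by
  induction n with
  | zero => simp
  | succ n ih =>
    have hab' : a ^ (n + 1) * b = 0 := by rw [pow_succ, mul_assoc, hab, mul_zero]
    have hba' : b ^ (n + 1) * a = 0 := by rw [pow_succ, mul_assoc, hba, mul_zero]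
    rw [pow_succ _ (n + 1), ih, add_mul, mul_add, mul_add, hab', hba', add_zero, zero_add,
      ← pow_succ, ← pow_succ]

theorem tendsto_pow_of_norm_sub_lt_one {R : Type*} [SeminormedRing R] {f e : R}
    (hfe : f * e = e) (hef : e * f = e) (he : IsIdempotentElem e) (h : ‖f - e‖ < 1) :
    Tendsto (fun n : ℕ ↦ f ^ n) atTop (𝓝 e) := by
  have hpow (n : ℕ) : f ^ (n + 1) = (f - e) ^ (n + 1) + e := by
    have h₁ : (f - e) * e = 0 := by rw [sub_mul, hfe, he.eq, sub_self]
    have h₂ : e * (f - e) = 0 := by rw [mul_sub, hef, he.eq, sub_self]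
    conv_lhs => rw [← sub_add_cancel f e]
    rw [add_pow_succ_of_mul_eq_zero h₁ h₂, he.pow_succ_eq]
  rw [← tendsto_add_atTop_iff_nat 1]
  simpa only [hpow, zero_add, Function.comp_def] using
    ((tendsto_pow_atTop_nhds_zero_of_norm_lt_one h).comp (tendsto_add_atTop_nat 1)).add_const e

theorem ContinuousLinearMap.opNorm_lt_one_of_norm_apply_lt {𝕜 E F : Type*} [RCLike 𝕜]
    [NormedAddCommGroup E] [NormedSpace 𝕜 E] [FiniteDimensional 𝕜 E]
    [SeminormedAddCommGroup F] [NormedSpace 𝕜 F] (T : E →L[𝕜] F)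
    (hT : ∀ x ≠ 0, ‖T x‖ < ‖x‖) : ‖T‖ < 1 := by
  rcases subsingleton_or_nontrivial E with hE | hE
  · simp [Subsingleton.elim T 0]
  have := FiniteDimensional.proper_rclike 𝕜 E
  obtain ⟨x₀, hx₀, hmax⟩ := (isCompact_sphere (0 : E) 1).exists_isMaxOn
    (Set.nonempty_coe_sort.mp (NormedSpace.sphere_nonempty_rclike 𝕜 zero_le_one))
    (continuous_norm.comp T.continuous).continuousOn
  rw [mem_sphere_zero_iff_norm] at hx₀
  calc ‖T‖ ≤ ‖T x₀‖ :=
        opNorm_le_of_unit_norm (norm_nonneg _) fun x hx ↦ hmax (mem_sphere_zero_iff_norm.mpr hx)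
    _ < 1 := hx₀ ▸ hT x₀ (norm_ne_zero_iff.mp (by simp [hx₀]))

namespace Submodule

variable {𝕜 E : Type*} [RCLike 𝕜] [NormedAddCommGroup E] [InnerProductSpace 𝕜 E]
variable (A B : Submodule 𝕜 E) [A.HasOrthogonalProjection] [B.HasOrthogonalProjection]

theorem norm_starProjection_comp_starProjection_apply_le (x : E) :
    ‖(A.starProjection ∘L B.starProjection) x‖ ≤ ‖x‖ :=
  (A.norm_starProjection_apply_le _).trans (B.norm_starProjection_apply_le x)

theorem mem_inf_of_norm_starProjection_comp_starProjection_apply_eq {x : E}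
    (h : ‖(A.starProjection ∘L B.starProjection) x‖ = ‖x‖) : x ∈ A ⊓ B := by
  rw [ContinuousLinearMap.comp_apply] at h
  have hxB : x ∈ B := (B.mem_iff_norm_starProjection x).mpr <|
    le_antisymm (B.norm_starProjection_apply_le x)
      (h ▸ A.norm_starProjection_apply_le (B.starProjection x))
  rw [starProjection_eq_self_iff.mpr hxB] at h
  exact ⟨(A.mem_iff_norm_starProjection x).mpr h, hxB⟩

variable [(A ⊓ B).HasOrthogonalProjection]

theorem starProjection_comp_starProjection_comp_starProjection_inf :
    (A.starProjection ∘L B.starProjection) ∘L (A ⊓ B).starProjection =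
      (A ⊓ B).starProjection := by
  ext x
  have hx := (A ⊓ B).starProjection_apply_mem x
  simp [starProjection_eq_self_iff.mpr hx.1, starProjection_eq_self_iff.mpr hx.2]

theorem starProjection_inf_comp_starProjection_comp_starProjection :
    (A ⊓ B).starProjection ∘L (A.starProjection ∘L B.starProjection) =
      (A ⊓ B).starProjection := by
  rw [← ContinuousLinearMap.comp_assoc,
    starProjection_comp_starProjection_of_le inf_le_left,
    starProjection_comp_starProjection_of_le inf_le_right]

theorem starProjection_comp_starProjection_sub_starProjection_inf :
    A.starProjection ∘L B.starProjection - (A ⊓ B).starProjection =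
      (A.starProjection ∘L B.starProjection) ∘L (A ⊓ B)ᗮ.starProjection := by
  rw [starProjection_orthogonal', ContinuousLinearMap.comp_sub,
    starProjection_comp_starProjection_comp_starProjection_inf]
  rfl

theorem norm_starProjection_comp_starProjection_sub_starProjection_inf_apply_lt {x : E}
    (hx : x ≠ 0) :
    ‖(A.starProjection ∘L B.starProjection - (A ⊓ B).starProjection) x‖ < ‖x‖ := by
  rw [starProjection_comp_starProjection_sub_starProjection_inf, ContinuousLinearMap.comp_apply]
  set C := (A ⊓ B)ᗮ
  have hf := norm_starProjection_comp_starProjection_apply_le A B (C.starProjection x)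
  have hC := C.norm_starProjection_apply_le x
  refine lt_of_le_of_ne (hf.trans hC) fun h ↦ hx ?_
  have hxC : x ∈ C := (C.mem_iff_norm_starProjection x).mpr (le_antisymm hC (h ▸ hf))
  rw [starProjection_eq_self_iff.mpr hxC] at h
  have hxAB := mem_inf_of_norm_starProjection_comp_starProjection_apply_eq A B h
  have hx₀ : x ∈ (A ⊓ B) ⊓ C := ⟨hxAB, hxC⟩
  rwa [inf_orthogonal_eq_bot, mem_bot] at hx₀

variable [FiniteDimensional 𝕜 E]

theorem norm_starProjection_comp_starProjection_sub_starProjection_inf_lt_one :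
    ‖A.starProjection ∘L B.starProjection - (A ⊓ B).starProjection‖ < 1 :=
  ContinuousLinearMap.opNorm_lt_one_of_norm_apply_lt _ fun _ hx ↦
    norm_starProjection_comp_starProjection_sub_starProjection_inf_apply_lt A B hx

theorem tendsto_pow_starProjection_comp_starProjection :
    Tendsto (fun n : ℕ ↦ (A.starProjection ∘L B.starProjection) ^ n) atTop
      (𝓝 (A ⊓ B).starProjection) :=
  tendsto_pow_of_norm_sub_lt_one (starProjection_comp_starProjection_comp_starProjection_inf A B)
    (starProjection_inf_comp_starProjection_comp_starProjection A B)
    (isIdempotentElem_starProjection _)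
    (norm_starProjection_comp_starProjection_sub_starProjection_inf_lt_one A B)

end Submodule

theorem Submodule.trace_starProjection {𝕜 E : Type*} [RCLike 𝕜] [NormedAddCommGroup E]
    [InnerProductSpace 𝕜 E] [FiniteDimensional 𝕜 E] (K : Submodule 𝕜 E) :
    LinearMap.trace 𝕜 E K.starProjection = Module.finrank 𝕜 K := by
  rw [(LinearMap.IsIdempotentElem.isProj_range _
    (ContinuousLinearMap.IsIdempotentElem.toLinearMap K.isIdempotentElem_starProjection)).trace,
    K.range_starProjection]

/-- Von Neumann's alternating projection theorem in finite dimensions: for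
subspaces `A, B` of a finite-dimensional complex inner product space with
orthogonal projections `P, Q`, the powers `(PQ)ʲ` converge in operator norm to
an idempotent with range `A ∩ B`, and `trace((PQ)ʲ) → dim (A ∩ B)`. -/
theorem stmt10 {H : Type*} [NormedAddCommGroup H] [InnerProductSpace ℂ H]
    [FiniteDimensional ℂ H] (A B : Submodule ℂ H) :
    ∃ E : H →L[ℂ] H,
      Tendsto
        (fun j : ℕ =>
          ((A.subtypeL ∘L A.orthogonalProjectionOnto) ∘L
            (B.subtypeL ∘L B.orthogonalProjectionOnto)) ^ j)
        atTop (nhds E) ∧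
      E ∘L E = E ∧
      LinearMap.range (E : H →ₗ[ℂ] H) = A ⊓ B ∧
      Tendsto
        (fun j : ℕ =>
          LinearMap.trace ℂ H
            ((((A.subtypeL ∘L A.orthogonalProjectionOnto) ∘L
              (B.subtypeL ∘L B.orthogonalProjectionOnto)) ^ j : H →L[ℂ] H) :
                H →ₗ[ℂ] H))
        atTop (nhds ((Module.finrank ℂ ↥(A ⊓ B) : ℂ))) := by
  -- `K.starProjection` unfolds to `K.subtypeL ∘L K.orthogonalProjectionOnto`.
  have hlim := A.tendsto_pow_starProjection_comp_starProjection B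
  refine ⟨(A ⊓ B).starProjection, hlim, (A ⊓ B).isIdempotentElem_starProjection.eq,
    (A ⊓ B).range_starProjection, ?_⟩
  have htrace : Continuous fun T : H →L[ℂ] H ↦ LinearMap.trace ℂ H T :=
    (LinearMap.trace ℂ H ∘ₗ ContinuousLinearMap.coeLM ℂ).continuous_of_finiteDimensional
  have htrace_lim := (htrace.tendsto _).comp hlim
  rwa [Submodule.trace_starProjection] at htrace_lim
end
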